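/- arXiv:0711.0085 — 4 statements merged into one kernel-verified Lean document; each statement's English description precedes it below -/
import Mathlib

section
/- Let 0 < q < 1 (real), h a positive integer, ξ a root of unity with |ξ q^h| < 1, x > 0 real, and define the twisted (h,q)-Hurwitz zeta function ζ_{ξ,q}^{(h)}(s,x) = Σ_{n≥0} ξ^n q^{nh}/(n+x)^s − (h log q)/(s−1) · Σ_{n≥0} ξ^n q^{nh}/(n+x)^{s−1}. Then for every positive integer n, the analytic continuation satisfies ζ_{ξ,q}^{(h)}(1−n, x) = −B_{n,ξ}^{(h)}(x,q)/n, where B_{n,ξ}^{(h)}(x,q) are the twisted (h,q)-Bernoulli polynomials defined by (t + log q^h) e^{tx}/(ξ q^h e^t − 1) = Σ B_{n,ξ}^{(h)}(x,q) t^n/n!. -/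
/-!
With `z = ξ q^h` we have `‖z‖ < 1`, so both series in `ζ(1 - n, x)` converge outright and are the
Lerch sums `S_j = ∑ₘ zᵐ (m + x)ʲ` for `j = n - 1` and `j = n`. Formally
`∑ⱼ S_j tʲ/j! = ∑ₘ zᵐ e^{(m+x)t} = -e^{xt}/(z eᵗ - 1)`; coefficientwise this is the recurrence
`z ∑ⱼ C(k,j) S_j = S_k - x^k` obtained by shifting `m ↦ m + 1`. Hence the generating function of
the twisted Bernoulli numbers is `-(t + h log q)` times that of the `S_j`, i.e.
`B_n = -(n S_{n-1} + h log q · S_n)`, which is `-n ζ(1 - n, x)`.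
-/

open Finset PowerSeries
open scoped Nat

theorem coeff_mk_div_factorial_mul_exp {K : Type*} [Field K] [CharZero K] (a : ℕ → K) (k : ℕ) :
    coeff k ((mk fun j => a j / j !) * exp K) =
      (∑ j ∈ range (k + 1), (k.choose j : K) * a j) / k ! := by
  rw [coeff_mul, Nat.sum_antidiagonal_eq_sum_range_succ
    (fun i j => coeff i (mk fun j => a j / j !) * coeff j (exp K)), sum_div]
  refine sum_congr rfl fun j hj => ?_
  have hjk : j ≤ k := Nat.lt_succ_iff.mp (mem_range.mp hj)
  have hk : (k ! : K) ≠ 0 := Nat.cast_ne_zero.2 k.factorial_ne_zero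
  simp only [coeff_exp, coeff_mk, Nat.cast_choose K hjk, map_div₀, map_one, map_natCast]
  field_simp

/-- The Lerch transcendent `Φ(z, -j, x)`. -/
noncomputable def lerchSum (z x : ℂ) (j : ℕ) : ℂ := ∑' m : ℕ, z ^ m * ((m : ℂ) + x) ^ j

noncomputable def lerchEGF (z x : ℂ) : PowerSeries ℂ := mk fun j => lerchSum z x j / j !

section

variable {z : ℂ}

theorem summable_geometric_mul_add_pow (hz : ‖z‖ < 1) (x : ℂ) (j : ℕ) :
    Summable fun m : ℕ => z ^ m * ((m : ℂ) + x) ^ j := by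
  simp_rw [add_pow, mul_sum]
  refine summable_sum fun i _ => ?_
  exact ((summable_pow_mul_geometric_of_norm_lt_one i hz).mul_left
    (x ^ (j - i) * j.choose i)).congr fun m => by ring

theorem mul_sum_choose_mul_lerchSum (hz : ‖z‖ < 1) (x : ℂ) (k : ℕ) :
    z * ∑ j ∈ range (k + 1), (k.choose j : ℂ) * lerchSum z x j = lerchSum z x k - x ^ k := by
  have hbinomial : ∑ j ∈ range (k + 1), (k.choose j : ℂ) * lerchSum z x j =
      ∑' m : ℕ, z ^ m * ((m : ℂ) + x + 1) ^ k := by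
    simp only [lerchSum, ← tsum_mul_left]
    rw [← Summable.tsum_finsetSum fun j _ => (summable_geometric_mul_add_pow hz x j).mul_left _]
    congr 1; funext m
    rw [add_pow, mul_sum]
    congr 1; funext j; ring
  rw [hbinomial, ← tsum_mul_left, lerchSum, (summable_geometric_mul_add_pow hz x k).tsum_eq_zero_add,
    pow_zero, Nat.cast_zero, zero_add, one_mul, add_sub_cancel_left]
  congr 1; funext m
  push_cast
  ring

theorem C_mul_exp_sub_one_mul_lerchEGF (hz : ‖z‖ < 1) (x : ℂ) :
    (C z * exp ℂ - 1) * lerchEGF z x = -rescale x (exp ℂ) := by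
  ext k
  rw [sub_mul, one_mul, mul_assoc, mul_comm (exp ℂ), lerchEGF, map_sub, coeff_C_mul,
    coeff_mk_div_factorial_mul_exp, mul_div_assoc', mul_sum_choose_mul_lerchSum hz, coeff_mk,
    map_neg, coeff_rescale, coeff_exp]
  simp only [map_div₀, map_one, map_natCast]
  ring

theorem eq_neg_lerchSum_of_egf (hz : ‖z‖ < 1) (x c : ℂ) (b : ℕ → ℂ)
    (hb : (X + C c) * rescale x (exp ℂ) = (C z * exp ℂ - 1) * PowerSeries.mk fun n => b n / n !)
    (k : ℕ) :
    b (k + 1) = -((k + 1) * lerchSum z x k + c * lerchSum z x (k + 1)) := by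
  have hne : C z * exp ℂ - 1 ≠ 0 := by
    intro h0
    have hz1 : z - 1 = 0 := by simpa using congrArg constantCoeff h0
    simp [sub_eq_zero.mp hz1] at hz
  have hmk : (PowerSeries.mk fun n => b n / n !) = -((X + C c) * lerchEGF z x) := by
    refine mul_left_cancel₀ hne ?_
    rw [← hb, mul_neg, mul_left_comm, C_mul_exp_sub_one_mul_lerchEGF hz, mul_neg, neg_neg]
  have hcoeff := congrArg (coeff (k + 1)) hmk
  simp only [coeff_mk, map_neg, add_mul, map_add, coeff_succ_X_mul, coeff_C_mul, lerchEGF] at hcoeff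
  rw [Nat.factorial_succ] at hcoeff
  push_cast at hcoeff
  have hk : (k ! : ℂ) ≠ 0 := Nat.cast_ne_zero.2 k.factorial_ne_zero
  field_simp at hcoeff
  linear_combination hcoeff

end

theorem div_cpow_neg_natCast (a w : ℂ) (j : ℕ) : a / w ^ (-(j : ℂ)) = a * w ^ j := by
  rw [Complex.cpow_neg, Complex.cpow_natCast, div_inv_eq_mul]

theorem twisted_hq_hurwitz_zeta_at_neg_integers_general
    (h : ℕ) (hh : 0 < h) (q : ℝ) (hq0 : 0 < q) (hq1 : q < 1)
    (ξ : ℂ) (hroot : ∃ m : ℕ, 0 < m ∧ ξ ^ m = 1) (x : ℝ)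
    (B : ℂ → ℕ → ℂ)
    (hB : ∀ z : ℂ,
      (PowerSeries.X + PowerSeries.C (R := ℂ) (Complex.log ((q : ℂ) ^ h))) *
          PowerSeries.rescale z (PowerSeries.exp ℂ) =
        (PowerSeries.C (R := ℂ) (ξ * (q : ℂ) ^ h) * PowerSeries.exp ℂ - 1) *
          PowerSeries.mk (fun n => B z n / (n.factorial : ℂ)))
    (n : ℕ) (hn : 1 ≤ n) :
    (∑' m : ℕ, ξ ^ m * (q : ℂ) ^ (m * h) / (((m : ℂ) + (x : ℂ)) ^ ((1 : ℂ) - n))) -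
      ((h : ℂ) * (Real.log q : ℂ)) / (((1 : ℂ) - n) - 1) *
        ∑' m : ℕ, ξ ^ m * (q : ℂ) ^ (m * h) / (((m : ℂ) + (x : ℂ)) ^ (((1 : ℂ) - n) - 1)) =
      - B (x : ℂ) n / (n : ℂ) := by
  obtain ⟨m₀, hm₀, hξ⟩ := hroot
  set z : ℂ := ξ * (q : ℂ) ^ h
  have hz : ‖z‖ < 1 := by
    rw [norm_mul, Complex.norm_eq_one_of_pow_eq_one hξ hm₀.ne', one_mul, norm_pow,
      Complex.norm_real, Real.norm_of_nonneg hq0.le]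
    exact pow_lt_one₀ hq0.le hq1 hh.ne'
  have hlog : Complex.log ((q : ℂ) ^ h) = h * Real.log q := by
    rw [← Complex.ofReal_pow, ← Complex.ofReal_log (pow_pos hq0 h).le, Real.log_pow]
    push_cast
    rfl
  have hsummand : ∀ (j : ℕ) (s : ℂ), s = -(j : ℂ) →
      ∑' m : ℕ, ξ ^ m * (q : ℂ) ^ (m * h) / ((m : ℂ) + x) ^ s = lerchSum z x j := by
    rintro j s rfl
    simp only [div_cpow_neg_natCast, lerchSum, z, mul_pow, pow_mul']
  obtain ⟨k, rfl⟩ : ∃ k, n = k + 1 := ⟨n - 1, by omega⟩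
  rw [hsummand k _ (by push_cast; ring), hsummand (k + 1) _ (by push_cast; ring),
    eq_neg_lerchSum_of_egf hz x _ _ (hB x) k, ← hlog,
    show (1 : ℂ) - ((k + 1 : ℕ) : ℂ) - 1 = -((k : ℂ) + 1) by push_cast; ring]
  have hk : (k : ℂ) + 1 ≠ 0 := Nat.cast_add_one_ne_zero k
  push_cast
  field_simp
  ring

/-- The twisted (h,q)-Hurwitz zeta function
`ζ_{ξ,q}^{(h)}(s,x) = Σ_{n≥0} ξ^n q^{nh}/(n+x)^s − (h log q)/(s−1) Σ_{n≥0} ξ^n q^{nh}/(n+x)^{s−1}`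
(the defining series converges for all `s` since `|q| < 1`) satisfies
`ζ_{ξ,q}^{(h)}(1−n, x) = −B_{n,ξ}^{(h)}(x,q)/n` for every positive integer `n`,
where the twisted (h,q)-Bernoulli polynomials are defined by the EGF
`(t + log q^h) e^{tx}/(ξ q^h e^t − 1) = Σ B_n(x) t^n/n!`. -/
theorem twisted_hq_hurwitz_zeta_at_neg_integers
    (h : ℕ) (hh : 0 < h) (q : ℝ) (hq0 : 0 < q) (hq1 : q < 1)
    (ξ : ℂ) (hroot : ∃ m : ℕ, 0 < m ∧ ξ ^ m = 1) (x : ℝ) (hx : 0 < x)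
    (B : ℂ → ℕ → ℂ)
    (hB : ∀ z : ℂ,
      (PowerSeries.X + PowerSeries.C (R := ℂ) (Complex.log ((q : ℂ) ^ h))) *
          PowerSeries.rescale z (PowerSeries.exp ℂ) =
        (PowerSeries.C (R := ℂ) (ξ * (q : ℂ) ^ h) * PowerSeries.exp ℂ - 1) *
          PowerSeries.mk (fun n => B z n / (n.factorial : ℂ)))
    (n : ℕ) (hn : 1 ≤ n) :
    (∑' m : ℕ, ξ ^ m * (q : ℂ) ^ (m * h) / (((m : ℂ) + (x : ℂ)) ^ ((1 : ℂ) - n))) -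
      ((h : ℂ) * (Real.log q : ℂ)) / (((1 : ℂ) - n) - 1) *
        ∑' m : ℕ, ξ ^ m * (q : ℂ) ^ (m * h) / (((m : ℂ) + (x : ℂ)) ^ (((1 : ℂ) - n) - 1)) =
      - B (x : ℂ) n / (n : ℂ) :=
  twisted_hq_hurwitz_zeta_at_neg_integers_general h hh q hq0 hq1 ξ hroot x B hB n hn
end

section
/- Let χ be a Dirichlet character of conductor f, ξ a root of unity, h a positive integer, and define the generalized twisted (h,q)-Bernoulli polynomials B_{n,χ,ξ}^{(h)}(z,q) by Σ_{a=1}^{f} χ(a) ξ^a q^{ha} e^{(z+a)t} (t + log q^h)/(ξ^f q^{hf} e^{ft} − 1) = Σ_{n≥0} B_{n,χ,ξ}^{(h)}(z,q) t^n/n!. Then for every positive integer n: B_{n,χ,ξ}^{(h)}(z,q) = f^{n−1} Σ_{a=1}^{f} χ(a) ξ^a q^{ha} B_{n,ξ^f}^{(h)}((a+z)/f, q^f), where B_{n,ξ}^{(h)}(x,q) is the twisted (h,q)-Bernoulli polynomial with generating function (t + log q^h) e^{tx}/(ξ q^h e^t − 1). -/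
/-!
Substituting `t ↦ f t` in the generating function of `B_{n,ξ^f}^{(h)}((a + z)/f, q^f)` turns its
denominator `ξ^f q^{hf} e^t - 1` into `ξ^f q^{hf} e^{ft} - 1` and, because
`log q^{fh} = f log q^h`, its numerator into `f (t + log q^h) e^{(z + a)t}`. Summing against
`χ(a) ξ^a q^{ha}` reproduces `f` times the generating function of `B_{n,χ,ξ}^{(h)}(z,q)`; the
common denominator has constant term `ξ^f q^{hf} - 1 ≠ 0`, so it cancels in the domain
`ℂ⟦X⟧`, and comparing coefficients of `t^n` gives the relation.
-/

open PowerSeries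

namespace PowerSeries

variable {R : Type*} [CommRing R]

theorem rescale_C (a b : R) : rescale a (C b) = C b := by
  ext (_ | n) <;> simp [coeff_C]

theorem constantCoeff_rescale (a : R) (φ : R⟦X⟧) :
    constantCoeff (rescale a φ) = constantCoeff φ := by
  rw [← coeff_zero_eq_constantCoeff_apply, coeff_rescale, pow_zero, one_mul,
    coeff_zero_eq_constantCoeff_apply]

variable [Algebra ℚ R]

theorem rescale_X_add_C_mul_rescale_exp (f c x : R) :
    rescale f ((X + C (f * c)) * rescale x (exp R)) =
      C f * ((X + C c) * rescale (x * f) (exp R)) := by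
  simp only [map_mul, map_add, rescale_X, rescale_C, rescale_rescale]
  ring

theorem C_mul_rescale_exp_sub_one_ne_zero {w : R} (hw : w ≠ 1) (f : R) :
    C w * rescale f (exp R) - 1 ≠ 0 := fun h ↦ hw <| by
  simpa [constantCoeff_rescale, constantCoeff_exp, sub_eq_zero] using congrArg constantCoeff h

end PowerSeries

theorem Complex.log_ofReal_pow {q : ℝ} (hq : 0 < q) (n : ℕ) :
    Complex.log ((q : ℂ) ^ n) = n * Real.log q := by
  rw [← Complex.ofReal_pow, ← Complex.ofReal_log (pow_pos hq n).le, Real.log_pow]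
  push_cast
  rfl

theorem C_mul_mk_eq_sum_rescale_of_twisted_egf {K ι : Type*} [Field K] [CharZero K]
    (s : Finset ι) (coef shift : ι → K) {f w : K} (hf : f ≠ 0) (hw : w ≠ 1) (c z : K)
    (b : ℕ → K) (g : K → ℕ → K)
    (hb : (X + C c) * ∑ a ∈ s, C (coef a) * rescale (z + shift a) (exp K) =
      (C w * rescale f (exp K) - 1) * mk b)
    (hg : ∀ x, (X + C (f * c)) * rescale x (exp K) = (C w * exp K - 1) * mk (g x)) :
    C f * mk b = ∑ a ∈ s, C (coef a) * rescale f (mk (g ((shift a + z) / f))) := by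
  set D := C w * rescale f (exp K) - 1
  have hterm : ∀ a, C f * ((X + C c) * rescale (z + shift a) (exp K)) =
      D * rescale f (mk (g ((shift a + z) / f))) := fun a ↦ by
    have := congrArg (rescale f) (hg ((shift a + z) / f))
    rw [rescale_X_add_C_mul_rescale_exp, div_mul_cancel₀ _ hf] at this
    rw [add_comm z]
    simpa only [map_mul, map_sub, map_one, rescale_C] using this
  refine mul_left_cancel₀ (C_mul_rescale_exp_sub_one_ne_zero hw f) ?_
  calc D * (C f * mk b)
        = ∑ a ∈ s, C (coef a) * (C f * ((X + C c) * rescale (z + shift a) (exp K))) := by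
        rw [mul_left_comm, ← hb, Finset.mul_sum, Finset.mul_sum]
        exact Finset.sum_congr rfl fun a _ ↦ by ring
    _ = D * ∑ a ∈ s, C (coef a) * rescale f (mk (g ((shift a + z) / f))) := by
        simp only [hterm, Finset.mul_sum]
        exact Finset.sum_congr rfl fun a _ ↦ by ring

theorem generalized_twisted_hq_bernoulli_distribution_general
    (h f : ℕ) (hf : 0 < f) (q : ℝ) (hq0 : 0 < q)
    (ξ : ℂ) (hξq : ξ ^ f * (q : ℂ) ^ (h * f) ≠ 1)
    (χ : DirichletCharacter ℂ f) (Bχ : ℂ → ℕ → ℂ) (Bf : ℂ → ℕ → ℂ)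
    (hBχ : ∀ z : ℂ,
      (PowerSeries.X + PowerSeries.C (Complex.log ((q : ℂ) ^ h))) *
          (∑ a ∈ Finset.Icc 1 f,
            PowerSeries.C (χ ((a : ℕ) : ZMod f) * ξ ^ a * (q : ℂ) ^ (h * a)) *
              PowerSeries.rescale (z + (a : ℂ)) (PowerSeries.exp ℂ)) =
        (PowerSeries.C (ξ ^ f * (q : ℂ) ^ (h * f)) *
            PowerSeries.rescale (f : ℂ) (PowerSeries.exp ℂ) - 1) *
          PowerSeries.mk (fun n => Bχ z n / (n.factorial : ℂ)))
    (hBf : ∀ x : ℂ,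
      (PowerSeries.X + PowerSeries.C (Complex.log ((q : ℂ) ^ (f * h)))) *
          PowerSeries.rescale x (PowerSeries.exp ℂ) =
        (PowerSeries.C (ξ ^ f * (q : ℂ) ^ (h * f)) * PowerSeries.exp ℂ - 1) *
          PowerSeries.mk (fun n => Bf x n / (n.factorial : ℂ))) :
    ∀ (z : ℂ) (n : ℕ), 1 ≤ n →
      Bχ z n = (f : ℂ) ^ (n - 1) * ∑ a ∈ Finset.Icc 1 f,
        χ ((a : ℕ) : ZMod f) * ξ ^ a * (q : ℂ) ^ (h * a) *
          Bf (((a : ℂ) + z) / (f : ℂ)) n := by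
  intro z n hn
  have hfc : (f : ℂ) ≠ 0 := Nat.cast_ne_zero.mpr hf.ne'
  have hlog : Complex.log ((q : ℂ) ^ (f * h)) = f * Complex.log ((q : ℂ) ^ h) := by
    rw [Complex.log_ofReal_pow hq0, Complex.log_ofReal_pow hq0]
    push_cast
    ring
  have hseries :=
    C_mul_mk_eq_sum_rescale_of_twisted_egf _ _ (fun a : ℕ ↦ (a : ℂ)) hfc hξq _ z _
    (fun x n ↦ Bf x n / n.factorial) (hBχ z) (hlog ▸ hBf)
  have hcoeff := congrArg (coeff n) hseries
  simp only [coeff_C_mul, coeff_mk, map_sum, coeff_rescale] at hcoeff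
  obtain ⟨m, rfl⟩ := Nat.exists_eq_add_of_le' hn
  rw [Nat.add_sub_cancel]
  field_simp at hcoeff
  rw [← Finset.sum_div, div_left_inj' (Nat.cast_ne_zero.mpr (Nat.factorial_ne_zero _))] at hcoeff
  refine mul_left_cancel₀ hfc (hcoeff.trans ?_)
  rw [Finset.mul_sum, Finset.mul_sum]
  exact Finset.sum_congr rfl fun a _ ↦ by ring

/-- The generalized twisted (h,q)-Bernoulli polynomials attached to a
Dirichlet character `χ` mod `f`, defined by the EGF
`Σ_{a=1}^f χ(a) ξ^a q^{ha} e^{(z+a)t}(t + log q^h)/(ξ^f q^{hf} e^{ft} − 1) = Σ B_{n,χ}(z) t^n/n!`,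
satisfy the distribution relation
`B_{n,χ,ξ}^{(h)}(z,q) = f^{n−1} Σ_{a=1}^f χ(a) ξ^a q^{ha} B_{n,ξ^f}^{(h)}((a+z)/f, q^f)`,
where `B_{n,ξ^f}^{(h)}(x,q^f)` has EGF `(t + log(q^{fh})) e^{tx}/(ξ^f q^{fh} e^t − 1)`. -/
theorem generalized_twisted_hq_bernoulli_distribution
    (h f : ℕ) (hh : 0 < h) (hf : 0 < f) (q : ℝ) (hq0 : 0 < q)
    (ξ : ℂ) (hξq : ξ ^ f * (q : ℂ) ^ (h * f) ≠ 1)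
    (χ : DirichletCharacter ℂ f) (Bχ : ℂ → ℕ → ℂ) (Bf : ℂ → ℕ → ℂ)
    (hBχ : ∀ z : ℂ,
      (PowerSeries.X + PowerSeries.C (Complex.log ((q : ℂ) ^ h))) *
          (∑ a ∈ Finset.Icc 1 f,
            PowerSeries.C (χ ((a : ℕ) : ZMod f) * ξ ^ a * (q : ℂ) ^ (h * a)) *
              PowerSeries.rescale (z + (a : ℂ)) (PowerSeries.exp ℂ)) =
        (PowerSeries.C (ξ ^ f * (q : ℂ) ^ (h * f)) *
            PowerSeries.rescale (f : ℂ) (PowerSeries.exp ℂ) - 1) *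
          PowerSeries.mk (fun n => Bχ z n / (n.factorial : ℂ)))
    (hBf : ∀ x : ℂ,
      (PowerSeries.X + PowerSeries.C (Complex.log ((q : ℂ) ^ (f * h)))) *
          PowerSeries.rescale x (PowerSeries.exp ℂ) =
        (PowerSeries.C (ξ ^ f * (q : ℂ) ^ (h * f)) * PowerSeries.exp ℂ - 1) *
          PowerSeries.mk (fun n => Bf x n / (n.factorial : ℂ))) :
    ∀ (z : ℂ) (n : ℕ), 1 ≤ n →
      Bχ z n = (f : ℂ) ^ (n - 1) * ∑ a ∈ Finset.Icc 1 f,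
        χ ((a : ℕ) : ZMod f) * ξ ^ a * (q : ℂ) ^ (h * a) *
          Bf (((a : ℂ) + z) / (f : ℂ)) n :=
  generalized_twisted_hq_bernoulli_distribution_general h f hf q hq0 ξ hξq χ Bχ Bf hBχ hBf
end

section
/- Let χ be a Dirichlet character with χ_n = χ w^{−n}, let F be a positive integral multiple of p* and of the conductor of χ_n, and suppose p divides the conductor condition so that χ_n(p) ≠ 0 implies F/p is a multiple of f_{χ_n}. Then B_{n,χ_n,ξ}^{(h)}(p*t, q) − χ_n(p) p^{n−1} B_{n,χ_n,ξ^p}^{(h)}(p^{−1}p*t, q^p) = F^{n−1} Σ_{a=1, p∤a}^{F} χ_n(a) ξ^a q^{ha} B_{n,ξ^F}^{(h)}((a + p*t)/F, q^F). -/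
/-!
Split the distribution sum for `B_{n,χₙ,ξ}` over `1 ≤ a ≤ F` according to whether `p ∣ a`.
Writing the multiples of `p` as `a = p b` with `1 ≤ b ≤ F'`, multiplicativity of `χₙ` at `p`
turns that part into `χₙ(p) p^{n-1}` times the distribution sum for `B_{n,χₙ,ξ^p}` at `z / p`,
which is what is subtracted.
-/

open Finset

theorem Nat.Icc_filter_dvd_mul_eq_image {p : ℕ} (hp : p ≠ 0) (m : ℕ) :
    {a ∈ Icc 1 (p * m) | p ∣ a} = (Icc 1 m).image (p * ·) := by
  ext a
  simp only [mem_filter, mem_Icc, mem_image]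
  constructor
  · rintro ⟨⟨ha_pos, ha_le⟩, b, rfl⟩
    exact ⟨b, ⟨Nat.pos_of_mul_pos_left ha_pos,
      Nat.le_of_mul_le_mul_left ha_le (Nat.pos_of_ne_zero hp)⟩, rfl⟩
  · rintro ⟨b, ⟨hb_pos, hb_le⟩, rfl⟩
    exact ⟨⟨Nat.mul_pos (Nat.pos_of_ne_zero hp) hb_pos, Nat.mul_le_mul_left p hb_le⟩,
      dvd_mul_right p b⟩

theorem Finset.sum_Icc_filter_dvd_mul {M : Type*} [AddCommMonoid M] {p : ℕ} (hp : p ≠ 0)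
    (m : ℕ) (f : ℕ → M) :
    ∑ a ∈ Icc 1 (p * m) with p ∣ a, f a = ∑ b ∈ Icc 1 m, f (p * b) := by
  rw [Nat.Icc_filter_dvd_mul_eq_image hp,
    sum_image fun _ _ _ _ h => Nat.eq_of_mul_eq_mul_left (Nat.pos_of_ne_zero hp) h]

theorem Nat.cast_mul_add_div_cast_mul {K : Type*} [Field K] {p : ℕ} (hp : (p : K) ≠ 0)
    (b m : ℕ) (z : K) :
    (((p * b : ℕ) : K) + z) / ((p * m : ℕ) : K) = ((b : K) + z / p) / m := by
  push_cast
  rw [← div_div, add_div, mul_div_cancel_left₀ _ hp]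

theorem generalized_bernoulli_p_deleted_distribution_general
    (p : ℕ) (hp : p.Prime) (h n : ℕ)
    (F' : ℕ) (F : ℕ) (hF : F = p * F')
    (pstar : ℕ)
    (q ξ t : ℂ) (χn : ℕ → ℂ)
    (hmult : ∀ b : ℕ, χn (p * b) = χn p * χn b)
    (BF : ℂ → ℂ) (Bχ Bχp : ℂ → ℂ)
    (hBχ : ∀ z : ℂ, Bχ z = (F : ℂ) ^ (n - 1) *
      ∑ a ∈ Finset.Icc 1 F, χn a * ξ ^ a * q ^ (h * a) * BF (((a : ℂ) + z) / (F : ℂ)))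
    (hBχp : ∀ z : ℂ, Bχp z = (F' : ℂ) ^ (n - 1) *
      ∑ b ∈ Finset.Icc 1 F', χn b * (ξ ^ p) ^ b * (q ^ p) ^ (h * b) *
        BF (((b : ℂ) + z) / (F' : ℂ))) :
    Bχ ((pstar : ℂ) * t) - χn p * (p : ℂ) ^ (n - 1) * Bχp ((pstar : ℂ) * t / (p : ℂ)) =
      (F : ℂ) ^ (n - 1) * ∑ a ∈ (Finset.Icc 1 F).filter (fun a => ¬ p ∣ a),
        χn a * ξ ^ a * q ^ (h * a) * BF (((a : ℂ) + (pstar : ℂ) * t) / (F : ℂ)) := by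
  subst hF
  set z : ℂ := (pstar : ℂ) * t
  have hp0 : (p : ℂ) ≠ 0 := Nat.cast_ne_zero.mpr hp.ne_zero
  have multiples_part :
      ∑ a ∈ Icc 1 (p * F') with p ∣ a,
        χn a * ξ ^ a * q ^ (h * a) * BF (((a : ℂ) + z) / ((p * F' : ℕ) : ℂ)) =
      χn p * ∑ b ∈ Icc 1 F', χn b * (ξ ^ p) ^ b * (q ^ p) ^ (h * b) *
        BF (((b : ℂ) + z / p) / F') := by
    rw [sum_Icc_filter_dvd_mul hp.ne_zero, mul_sum]
    refine sum_congr rfl fun b _ => ?_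
    rw [hmult, Nat.cast_mul_add_div_cast_mul hp0, mul_left_comm h p, pow_mul, pow_mul]
    ring
  rw [hBχ, hBχp, ← sum_filter_add_sum_filter_not (Icc 1 (p * F')) (p ∣ ·), multiples_part,
    Nat.cast_mul, mul_pow]
  ring

/-- Let `F = p F'` be a positive multiple of `p` (and of the relevant
conductors), let `χₙ = χ w^{−n}` (given abstractly as a function `χn` satisfying
`χn(p b) = χn(p) χn(b)`), and suppose the generalized twisted (h,q)-Bernoulli polynomials
satisfy the distribution relations
`B_{n,χₙ,ξ}^{(h)}(z,q) = F^{n−1} Σ_{a=1}^F χₙ(a) ξ^a q^{ha} B_{n,ξ^F}^{(h)}((a+z)/F, q^F)` and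
`B_{n,χₙ,ξ^p}^{(h)}(z,q^p) = F'^{n−1} Σ_{b=1}^{F'} χₙ(b) (ξ^p)^b (q^p)^{hb} B_{n,ξ^F}^{(h)}((b+z)/F', q^F)`.
Then
`B_{n,χₙ,ξ}^{(h)}(p*t, q) − χₙ(p) p^{n−1} B_{n,χₙ,ξ^p}^{(h)}(p^{−1}p*t, q^p)
  = F^{n−1} Σ_{a=1, p∤a}^F χₙ(a) ξ^a q^{ha} B_{n,ξ^F}^{(h)}((a + p*t)/F, q^F)`. -/
theorem generalized_bernoulli_p_deleted_distribution
    (p : ℕ) (hp : p.Prime) (h n : ℕ) (hh : 0 < h) (hn : 1 ≤ n)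
    (F' : ℕ) (hF' : 0 < F') (F : ℕ) (hF : F = p * F')
    (pstar : ℕ) (hps : pstar = if p = 2 then 4 else p)
    (q ξ t : ℂ) (χn : ℕ → ℂ)
    (hmult : ∀ b : ℕ, χn (p * b) = χn p * χn b)
    (BF : ℂ → ℂ) (Bχ Bχp : ℂ → ℂ)
    (hBχ : ∀ z : ℂ, Bχ z = (F : ℂ) ^ (n - 1) *
      ∑ a ∈ Finset.Icc 1 F, χn a * ξ ^ a * q ^ (h * a) * BF (((a : ℂ) + z) / (F : ℂ)))
    (hBχp : ∀ z : ℂ, Bχp z = (F' : ℂ) ^ (n - 1) *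
      ∑ b ∈ Finset.Icc 1 F', χn b * (ξ ^ p) ^ b * (q ^ p) ^ (h * b) *
        BF (((b : ℂ) + z) / (F' : ℂ))) :
    Bχ ((pstar : ℂ) * t) - χn p * (p : ℂ) ^ (n - 1) * Bχp ((pstar : ℂ) * t / (p : ℂ)) =
      (F : ℂ) ^ (n - 1) * ∑ a ∈ (Finset.Icc 1 F).filter (fun a => ¬ p ∣ a),
        χn a * ξ ^ a * q ^ (h * a) * BF (((a : ℂ) + (pstar : ℂ) * t) / (F : ℂ)) :=
  generalized_bernoulli_p_deleted_distribution_general p hp h n F' F hF pstar q ξ t χn hmult BF Bχ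
    Bχp hBχ hBχp
end

section
/- Define L_{ξ,p,q}^{(h)}(s,t,χ) = (1/((s−1)F)) Σ_{a=1,(a,p)=1}^{F} χ(a) <a+p*t>^{1−s} q^{ha} ξ^a Σ_{k≥0} C(1−s, k) (F/(a+p*t))^k B_{k,ξ^F}^{(h)}(q^F), where F is a positive integral multiple of p* and of f_{χ_n}. Then for every positive integer n: L_{ξ,p,q}^{(h)}(1−n, t, χ) = −(1/n)·(B_{n,χ_n,ξ}^{(h)}(p*t, q) − χ_n(p) p^{n−1} B_{n,χ_n,ξ^p}^{(h)}(p^{−1}p*t, q^p)). -/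
/-!
At `s = 1 - n` the binomial series `Σ C(1-s, k) X^k B_k` terminates, and after pulling
`⟨a + p*t⟩^n` inside, each summand of `L` becomes `F^n χₙ(a) ξ^a q^{ha} B_n((a + p*t)/F)`;
so `L(1-n)` is `-F^{n-1}/n` times the twisted Bernoulli sum over the residues prime to `p`.
Splitting the full distribution sum for `B_{n,χₙ,ξ}` over `a ≤ F = pF'` into multiples `a = pb`
and the rest, multiplicativity of `χₙ` turns the multiples into
`χₙ(p) p^{n-1} B_{n,χₙ,ξ^p}(p^{-1}p*t, q^p)`, which is exactly the Euler factor subtracted.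
-/

/-- The generalized binomial coefficient `C(z, k) = z(z−1)⋯(z−k+1)/k!` for `z : ℂ`. -/
noncomputable def cchoose (z : ℂ) (k : ℕ) : ℂ :=
  (∏ i ∈ Finset.range k, (z - (i : ℂ))) / (k.factorial : ℂ)

open Finset

lemma cchoose_natCast (n k : ℕ) : cchoose n k = n.choose k := by
  have hk : (k.factorial : ℂ) ≠ 0 := by exact_mod_cast k.factorial_ne_zero
  rw [cchoose, ← descPochhammer_eval_eq_prod_range, descPochhammer_eval_eq_descFactorial,
    Nat.descFactorial_eq_factorial_mul_choose, Nat.cast_mul, mul_div_cancel_left₀ _ hk]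

lemma tsum_cchoose_natCast_mul_pow_mul (n : ℕ) (x : ℂ) (b : ℕ → ℂ) :
    ∑' k, cchoose n k * x ^ k * b k = ∑ k ∈ range (n + 1), (n.choose k : ℂ) * x ^ k * b k := by
  simp_rw [cchoose_natCast]
  exact tsum_eq_sum fun k hk => by
    rw [Nat.choose_eq_zero_of_lt (by simpa [Nat.lt_succ_iff] using hk), Nat.cast_zero,
      zero_mul, zero_mul]

lemma pow_mul_sum_choose_div_pow_mul {K : Type*} [Field K] {x y : K} (hx : x ≠ 0) (hy : y ≠ 0)
    (n : ℕ) (b : ℕ → K) :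
    x ^ n * ∑ k ∈ range (n + 1), (n.choose k : K) * (y / x) ^ k * b k =
      y ^ n * ∑ k ∈ range (n + 1), (n.choose k : K) * (x / y) ^ (n - k) * b k := by
  simp only [mul_sum]
  refine sum_congr rfl fun k hk => ?_
  obtain ⟨m, rfl⟩ := Nat.exists_eq_add_of_le (Nat.lt_succ_iff.mp (mem_range.mp hk))
  rw [Nat.add_sub_cancel_left, div_pow, div_pow, pow_add, pow_add]
  field_simp

lemma mul_cpow_natCast_mul_tsum_cchoose {x y : ℂ} (hx : x ≠ 0) (hy : y ≠ 0) (u : ℂ) (n : ℕ)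
    (b : ℕ → ℂ) :
    (u * x) ^ (n : ℂ) * ∑' k, cchoose n k * (y / x) ^ k * b k =
      u ^ n * y ^ n * ∑ k ∈ range (n + 1), (n.choose k : ℂ) * (x / y) ^ (n - k) * b k := by
  rw [Complex.cpow_natCast, tsum_cchoose_natCast_mul_pow_mul, mul_pow, mul_assoc,
    pow_mul_sum_choose_div_pow_mul hx hy, mul_assoc]

lemma sum_Icc_mul_eq_sum_Icc_mul_add_sum_filter_not_dvd {M : Type*} [AddCommMonoid M]
    {p : ℕ} (hp : 0 < p) (N : ℕ) (f : ℕ → M) :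
    ∑ a ∈ Icc 1 (p * N), f a =
      ∑ b ∈ Icc 1 N, f (p * b) + ∑ a ∈ (Icc 1 (p * N)).filter (fun a => ¬ p ∣ a), f a := by
  have hmultiples : (Icc 1 (p * N)).filter (fun a => p ∣ a) = (Icc 1 N).image (p * ·) := by
    ext a
    simp only [mem_filter, mem_Icc, mem_image]
    constructor
    · rintro ⟨⟨h1, h2⟩, b, rfl⟩
      exact ⟨b, ⟨Nat.pos_of_mul_pos_left h1, Nat.le_of_mul_le_mul_left h2 hp⟩, rfl⟩
    · rintro ⟨b, ⟨h1, h2⟩, rfl⟩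
      exact ⟨⟨Nat.mul_pos hp h1, Nat.mul_le_mul_left p h2⟩, b, rfl⟩
  rw [← sum_filter_add_sum_filter_not _ (fun a => p ∣ a), hmultiples,
    sum_image fun _ _ _ _ => Nat.eq_of_mul_eq_mul_left hp]

lemma sum_Icc_twisted_sub_eq_sum_filter_not_dvd {p : ℕ} (hp : 0 < p) (N h : ℕ) {χ : ℕ → ℂ}
    (hmult : ∀ b : ℕ, χ (p * b) = χ p * χ b) (ξ q c : ℂ) (P : ℂ → ℂ) :
    ∑ a ∈ Icc 1 (p * N), χ a * ξ ^ a * q ^ (h * a) * P ((a + c) / ((p * N : ℕ) : ℂ)) -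
        χ p * ∑ b ∈ Icc 1 N, χ b * (ξ ^ p) ^ b * (q ^ p) ^ (h * b) * P ((b + c / p) / N) =
      ∑ a ∈ (Icc 1 (p * N)).filter (fun a => ¬ p ∣ a),
        χ a * ξ ^ a * q ^ (h * a) * P ((a + c) / ((p * N : ℕ) : ℂ)) := by
  have hp0 : (p : ℂ) ≠ 0 := by exact_mod_cast hp.ne'
  have hmultiple : ∀ b : ℕ,
      χ (p * b) * ξ ^ (p * b) * q ^ (h * (p * b)) * P (((p * b : ℕ) + c) / ((p * N : ℕ) : ℂ)) =
        χ p * (χ b * (ξ ^ p) ^ b * (q ^ p) ^ (h * b) * P ((b + c / p) / N)) := by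
    intro b
    have harg : ((p * b : ℕ) + c) / ((p * N : ℕ) : ℂ) = (b + c / p) / N := by
      push_cast
      field_simp
    rw [hmult, harg, mul_left_comm h, pow_mul, pow_mul, pow_mul]
    ring
  rw [sum_Icc_mul_eq_sum_Icc_mul_add_sum_filter_not_dvd hp, sum_congr rfl fun b _ => hmultiple b,
    ← mul_sum, add_sub_cancel_left]

theorem padic_twisted_hq_L_at_neg_integers_general
    (p : ℕ) (hp : p.Prime) (h n : ℕ) (hn : 1 ≤ n)
    (F' : ℕ) (hF' : 0 < F') (F : ℕ) (hF : F = p * F')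
    (pstar : ℕ)
    (q ξ t : ℂ) (w χ : ℕ → ℂ)
    (ht : ∀ a : ℕ, 0 < a → (a : ℂ) + (pstar : ℂ) * t ≠ 0)
    (χn : ℕ → ℂ) (hχn : ∀ a : ℕ, χn a = χ a * ((w a)⁻¹) ^ n)
    (hmult : ∀ b : ℕ, χn (p * b) = χn p * χn b)
    (B : ℕ → ℂ) (Bpoly : ℂ → ℂ)
    (hBpoly : ∀ x : ℂ, Bpoly x =
      ∑ k ∈ Finset.range (n + 1), (n.choose k : ℂ) * x ^ (n - k) * B k)
    (Bχn Bχnp : ℂ → ℂ)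
    (hBχn : ∀ z : ℂ, Bχn z = (F : ℂ) ^ (n - 1) *
      ∑ a ∈ Finset.Icc 1 F, χn a * ξ ^ a * q ^ (h * a) * Bpoly (((a : ℂ) + z) / (F : ℂ)))
    (hBχnp : ∀ z : ℂ, Bχnp z = (F' : ℂ) ^ (n - 1) *
      ∑ b ∈ Finset.Icc 1 F', χn b * (ξ ^ p) ^ b * (q ^ p) ^ (h * b) *
        Bpoly (((b : ℂ) + z) / (F' : ℂ)))
    (L : ℂ → ℂ)
    (hL : ∀ s : ℂ, L s = 1 / ((s - 1) * (F : ℂ)) *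
      ∑ a ∈ (Finset.Icc 1 F).filter (fun a => ¬ p ∣ a),
        χ a * ((w a)⁻¹ * ((a : ℂ) + (pstar : ℂ) * t)) ^ ((1 : ℂ) - s) *
          q ^ (h * a) * ξ ^ a *
          ∑' k : ℕ, cchoose ((1 : ℂ) - s) k *
            ((F : ℂ) / ((a : ℂ) + (pstar : ℂ) * t)) ^ k * B k) :
    L ((1 : ℂ) - n) =
      -(Bχn ((pstar : ℂ) * t) - χn p * (p : ℂ) ^ (n - 1) *
          Bχnp ((pstar : ℂ) * t / (p : ℂ))) / (n : ℂ) := by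
  subst hF
  obtain ⟨m, rfl⟩ : ∃ m, n = m + 1 := ⟨n - 1, by omega⟩
  have hp0 : (p : ℂ) ≠ 0 := by exact_mod_cast hp.ne_zero
  have hF'0 : (F' : ℂ) ≠ 0 := by exact_mod_cast hF'.ne'
  have hF0 : ((p * F' : ℕ) : ℂ) ≠ 0 := by push_cast; exact mul_ne_zero hp0 hF'0
  set c := (pstar : ℂ) * t
  have hsummand : ∀ a ∈ (Icc 1 (p * F')).filter (fun a => ¬ p ∣ a),
      χ a * ((w a)⁻¹ * (a + c)) ^ ((m + 1 : ℕ) : ℂ) * q ^ (h * a) * ξ ^ a *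
          ∑' k, cchoose (m + 1 : ℕ) k * (((p * F' : ℕ) : ℂ) / (a + c)) ^ k * B k =
        ((p * F' : ℕ) : ℂ) ^ (m + 1) *
          (χn a * ξ ^ a * q ^ (h * a) * Bpoly ((a + c) / ((p * F' : ℕ) : ℂ))) := by
    intro a ha
    have hac : (a : ℂ) + c ≠ 0 := ht a (by grind)
    rw [hχn, hBpoly]
    linear_combination (χ a * q ^ (h * a) * ξ ^ a) *
      mul_cpow_natCast_mul_tsum_cchoose hac hF0 (w a)⁻¹ (m + 1) B
  rw [hL, sub_sub_cancel, sub_sub_cancel_left, sum_congr rfl hsummand, ← mul_sum,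
    ← sum_Icc_twisted_sub_eq_sum_filter_not_dvd hp.pos _ _ hmult, hBχn, hBχnp,
    Nat.add_sub_cancel]
  generalize (∑ a ∈ Icc 1 (p * F'), _ : ℂ) = X
  generalize (∑ b ∈ Icc 1 F', _ : ℂ) = Y
  push_cast
  field_simp
  ring

/-- The twisted p-adic (h,q)-L-function
`L_{ξ,p,q}^{(h)}(s,t,χ) = (1/((s−1)F)) Σ_{a=1,(a,p)=1}^F χ(a) ⟨a+p*t⟩^{1−s} q^{ha} ξ^a
   Σ_{k≥0} C(1−s,k) (F/(a+p*t))^k B_{k,ξ^F}^{(h)}(q^F)`,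
with `⟨x⟩ = w(x)⁻¹ x`, interpolates the generalized twisted (h,q)-Bernoulli polynomials:
`L_{ξ,p,q}^{(h)}(1−n,t,χ) = −(B_{n,χₙ,ξ}^{(h)}(p*t,q) − χₙ(p) p^{n−1} B_{n,χₙ,ξ^p}^{(h)}(p^{−1}p*t,q^p))/n`,
where `χₙ = χ w^{−n}`, `B_{n,ξ^F}^{(h)}(x,q^F) = Σ_{k≤n} C(n,k) x^{n−k} B_k`, and the
`B_{n,χₙ}` are given by their distribution relations over the moduli `F` and `F' = F/p`. -/
theorem padic_twisted_hq_L_at_neg_integers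
    (p : ℕ) (hp : p.Prime) (h n : ℕ) (hh : 0 < h) (hn : 1 ≤ n)
    (F' : ℕ) (hF' : 0 < F') (F : ℕ) (hF : F = p * F')
    (pstar : ℕ) (hps : pstar = if p = 2 then 4 else p) (hpsF : pstar ∣ F)
    (q ξ t : ℂ) (w χ : ℕ → ℂ)
    (ht : ∀ a : ℕ, 0 < a → (a : ℂ) + (pstar : ℂ) * t ≠ 0)
    (χn : ℕ → ℂ) (hχn : ∀ a : ℕ, χn a = χ a * ((w a)⁻¹) ^ n)
    (hmult : ∀ b : ℕ, χn (p * b) = χn p * χn b)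
    (B : ℕ → ℂ) (Bpoly : ℂ → ℂ)
    (hBpoly : ∀ x : ℂ, Bpoly x =
      ∑ k ∈ Finset.range (n + 1), (n.choose k : ℂ) * x ^ (n - k) * B k)
    (Bχn Bχnp : ℂ → ℂ)
    (hBχn : ∀ z : ℂ, Bχn z = (F : ℂ) ^ (n - 1) *
      ∑ a ∈ Finset.Icc 1 F, χn a * ξ ^ a * q ^ (h * a) * Bpoly (((a : ℂ) + z) / (F : ℂ)))
    (hBχnp : ∀ z : ℂ, Bχnp z = (F' : ℂ) ^ (n - 1) *
      ∑ b ∈ Finset.Icc 1 F', χn b * (ξ ^ p) ^ b * (q ^ p) ^ (h * b) *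
        Bpoly (((b : ℂ) + z) / (F' : ℂ)))
    (L : ℂ → ℂ)
    (hL : ∀ s : ℂ, L s = 1 / ((s - 1) * (F : ℂ)) *
      ∑ a ∈ (Finset.Icc 1 F).filter (fun a => ¬ p ∣ a),
        χ a * ((w a)⁻¹ * ((a : ℂ) + (pstar : ℂ) * t)) ^ ((1 : ℂ) - s) *
          q ^ (h * a) * ξ ^ a *
          ∑' k : ℕ, cchoose ((1 : ℂ) - s) k *
            ((F : ℂ) / ((a : ℂ) + (pstar : ℂ) * t)) ^ k * B k) :
    L ((1 : ℂ) - n) =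
      -(Bχn ((pstar : ℂ) * t) - χn p * (p : ℂ) ^ (n - 1) *
          Bχnp ((pstar : ℂ) * t / (p : ℂ))) / (n : ℂ) :=
  padic_twisted_hq_L_at_neg_integers_general p hp h n hn F' hF' F hF pstar q ξ t w χ ht χn hχn hmult
    B Bpoly hBpoly Bχn Bχnp hBχn hBχnp L hL
end
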